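/- arXiv:2205.14843 — 2 statements merged into one kernel-verified Lean document; each statement's English description precedes it below -/
import Mathlib

section
/- Let A be a symmetric Laplacian matrix (eigenvalues ≤ 0) and D = diag(d_1,...,d_N) with d_i ≥ 0 not all zero, where the graph of A is connected. Then A - D is negative definite, i.e., all eigenvalues of A - D are strictly negative. -/
open Matrix

/-- Pinning control stability: if `A` is a symmetric Laplacian matrix with connected
underlying graph and `D = diag(d)` with `d ≥ 0` not all zero, then `A - D` is
negative definite: all its eigenvalues are strictly negative. -/
theorem laplacian_sub_pinning_negdef {N : ℕ} (A : Matrix (Fin N) (Fin N) ℝ)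
    (hsymm : A.IsSymm)
    (hoff : ∀ i j, i ≠ j → 0 ≤ A i j)
    (hdiag : ∀ i, A i i = -(∑ j ∈ Finset.univ.erase i, A i j))
    (G : SimpleGraph (Fin N))
    (hG : ∀ i j, G.Adj i j ↔ i ≠ j ∧ 0 < A i j)
    (hconn : G.Connected)
    (d : Fin N → ℝ) (hd : ∀ i, 0 ≤ d i) (hd0 : d ≠ 0) :
    ∀ (μ : ℝ) (x : Fin N → ℝ), x ≠ 0 →
      (A - Matrix.diagonal d) *ᵥ x = μ • x → μ < 0 := by
  intro μ x hx0 heig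
  -- row sums are zero
  have hrow : ∀ i, ∑ j, A i j = 0 := by
    intro i
    rw [← Finset.add_sum_erase _ _ (Finset.mem_univ i), hdiag i]
    ring
  have hsym' : ∀ i j, A j i = A i j := fun i j => hsymm.apply i j
  have hcol : ∀ j, ∑ i, A i j = 0 := by
    intro j
    calc ∑ i, A i j = ∑ i, A j i := by
          exact Finset.sum_congr rfl fun i _ => hsym' j i
      _ = 0 := hrow j
  set S := ∑ i, ∑ j, A i j * (x i - x j) ^ 2 with hSdef
  have h1 : ∑ i, ∑ j, A i j * x i ^ 2 = 0 := by
    refine Finset.sum_eq_zero fun i _ => ?_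
    rw [← Finset.sum_mul, hrow, zero_mul]
  have h2 : ∑ i, ∑ j, A i j * x j ^ 2 = 0 := by
    rw [Finset.sum_comm]
    refine Finset.sum_eq_zero fun j _ => ?_
    rw [← Finset.sum_mul, hcol, zero_mul]
  have hx : x ⬝ᵥ (A *ᵥ x) = ∑ i, ∑ j, x i * (A i j * x j) := by
    simp [dotProduct, mulVec, Finset.mul_sum]
  have hS : S = -2 * (x ⬝ᵥ (A *ᵥ x)) := by
    calc S = ∑ i, ∑ j, (A i j * x i ^ 2 + A i j * x j ^ 2
              - 2 * (x i * (A i j * x j))) := by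
          refine Finset.sum_congr rfl fun i _ => Finset.sum_congr rfl fun j _ => ?_
          ring
      _ = (∑ i, ∑ j, A i j * x i ^ 2) + (∑ i, ∑ j, A i j * x j ^ 2)
            - 2 * ∑ i, ∑ j, x i * (A i j * x j) := by
          simp [Finset.sum_add_distrib, Finset.sum_sub_distrib, Finset.mul_sum]
      _ = -2 * (x ⬝ᵥ (A *ᵥ x)) := by rw [h1, h2, hx]; ring
  have hSterm : ∀ i ∈ (Finset.univ : Finset (Fin N)), ∀ j ∈ (Finset.univ : Finset (Fin N)),
      0 ≤ A i j * (x i - x j) ^ 2 := by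
    intro i _ j _
    rcases eq_or_ne i j with rfl | hij
    · simp
    · exact mul_nonneg (hoff i j hij) (sq_nonneg _)
  have hSnn : 0 ≤ S := Finset.sum_nonneg fun i hi =>
    Finset.sum_nonneg fun j hj => hSterm i hi j hj
  have hDterm : ∀ i ∈ (Finset.univ : Finset (Fin N)), 0 ≤ d i * x i ^ 2 :=
    fun i _ => mul_nonneg (hd i) (sq_nonneg _)
  have hDnn : 0 ≤ ∑ i, d i * x i ^ 2 := Finset.sum_nonneg hDterm
  -- quadratic form identity
  have hdq : x ⬝ᵥ (Matrix.diagonal d *ᵥ x) = ∑ i, d i * x i ^ 2 := by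
    simp [dotProduct, mulVec_diagonal]
    exact Finset.sum_congr rfl fun i _ => by ring
  have hQ : x ⬝ᵥ ((A - Matrix.diagonal d) *ᵥ x)
      = -(1/2) * S - ∑ i, d i * x i ^ 2 := by
    rw [sub_mulVec, dotProduct_sub, hdq, hS]; ring
  have hμQ : μ * (x ⬝ᵥ x) = x ⬝ᵥ ((A - Matrix.diagonal d) *ᵥ x) := by
    rw [heig, dotProduct_smul]; simp [smul_eq_mul]
  -- strict negativity of the quadratic form
  have hQlt : x ⬝ᵥ ((A - Matrix.diagonal d) *ᵥ x) < 0 := by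
    rcases lt_or_eq_of_le (show x ⬝ᵥ ((A - Matrix.diagonal d) *ᵥ x) ≤ 0 by
      rw [hQ]; nlinarith) with h | h
    · exact h
    · exfalso
      have hS0 : S = 0 := by nlinarith [hQ, h]
      have hD0 : ∑ i, d i * x i ^ 2 = 0 := by nlinarith [hQ, h]
      have hSzero : ∀ i ∈ (Finset.univ : Finset (Fin N)), ∀ j ∈ (Finset.univ : Finset (Fin N)),
          A i j * (x i - x j) ^ 2 = 0 := by
        have h' := (Finset.sum_eq_zero_iff_of_nonneg
          (fun i hi => Finset.sum_nonneg fun j hj => hSterm i hi j hj)).mp hS0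
        intro i hi j hj
        exact (Finset.sum_eq_zero_iff_of_nonneg (fun j hj => hSterm i hi j hj)).mp
          (h' i hi) j hj
      have hDzero : ∀ i, d i * x i ^ 2 = 0 :=
        fun i => (Finset.sum_eq_zero_iff_of_nonneg hDterm).mp hD0 i (Finset.mem_univ i)
      -- adjacent vertices have equal values
      have hadj : ∀ a b, G.Adj a b → x a = x b := by
        intro a b hab
        obtain ⟨hne, hpos⟩ := (hG a b).mp hab
        have := hSzero a (Finset.mem_univ a) b (Finset.mem_univ b)
        have hsq : (x a - x b) ^ 2 = 0 := by
          rcases mul_eq_zero.mp this with h | h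
          · exact absurd h (ne_of_gt hpos)
          · exact h
        have := pow_eq_zero_iff (n := 2) (by norm_num) |>.mp hsq
        linarith [this]
      have hwalk : ∀ a b : Fin N, G.Reachable a b → x a = x b := by
        intro a b h
        obtain ⟨w⟩ := h
        induction w with
        | nil => rfl
        | cons h _ ih => exact (hadj _ _ h).trans ih
      obtain ⟨k, hk⟩ := Function.ne_iff.mp hd0
      have hdk : 0 < d k := lt_of_le_of_ne (hd k) (Ne.symm hk)
      have hxk : x k = 0 := by
        have := hDzero k
        rcases mul_eq_zero.mp this with h | h
        · exact absurd h (ne_of_gt hdk)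
        · exact pow_eq_zero_iff (n := 2) (by norm_num) |>.mp h
      apply hx0
      funext i
      have := hwalk k i (hconn.preconnected k i)
      simp [← this, hxk]
  have hxx : 0 < x ⬝ᵥ x := by
    have hnn : 0 ≤ x ⬝ᵥ x := Finset.sum_nonneg fun i _ => mul_self_nonneg (x i)
    rcases lt_or_eq_of_le hnn with h | h
    · exact h
    · exact absurd ((dotProduct_self_eq_zero).mp h.symm) hx0
  nlinarith [hμQ, hQlt, hxx]
end

section
/- PBH criterion: the pair (A, B) is controllable if and only if rank(λI − A, B) = n for every eigenvalue λ of A. -/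
/-!
Both rank conditions are statements about row vectors `y` with `y B = 0`. Full Kalman rank says
that no nonzero `y` kills `Aᵏ B` for all `k < n`, equivalently (Cayley–Hamilton) for all `k`;
rank `n` of `(λI − A, B)` says that no nonzero left eigenvector of `A` for `λ` kills `B`.
A left eigenvector killing `B` kills every `Aᵏ B`. Conversely, the space of `y` killing every
`Aᵏ B` is invariant under `y ↦ y A`, so over `ℂ` it contains a left eigenvector as soon as it
is nonzero. Left and right eigenvalues of `A` agree, both being the roots of `det (λI − A)`.
-/

open Matrix

/-- The Kalman controllability matrix `(B, AB, …, A^{n-1}B)`. -/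
noncomputable def kalmanMatrix {n m : ℕ} (A : Matrix (Fin n) (Fin n) ℂ)
    (B : Matrix (Fin n) (Fin m) ℂ) : Matrix (Fin n) (Fin n × Fin m) ℂ :=
  Matrix.of fun i p => (A ^ (p.1 : ℕ) * B) i p.2

section UnobservableSubspace

variable {K V W : Type*} [Field K] [AddCommGroup V] [Module K V] [AddCommGroup W] [Module K W]

theorem Module.End.iInf_ker_comp_pow_eq_bot_iff [IsAlgClosed K] [FiniteDimensional K V]
    (f : Module.End K V) (g : V →ₗ[K] W) :
    ⨅ k : ℕ, LinearMap.ker (g ∘ₗ f ^ k) = ⊥ ↔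
      ∀ (μ : K) (v : V), f v = μ • v → g v = 0 → v = 0 := by
  set N := ⨅ k : ℕ, LinearMap.ker (g ∘ₗ f ^ k)
  have mem_N {v : V} : v ∈ N ↔ ∀ k : ℕ, g ((f ^ k) v) = 0 := by
    simp [N, Submodule.mem_iInf]
  constructor
  · intro hN μ v hv hgv
    have pow_apply (k : ℕ) : (f ^ k) v = μ ^ k • v := by
      induction k with
      | zero => simp
      | succ k ih => rw [pow_succ', Module.End.mul_apply, ih, map_smul, hv, smul_smul, pow_succ]
    rw [← Submodule.mem_bot K, ← hN, mem_N]
    intro k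
    rw [pow_apply, map_smul, hgv, smul_zero]
  · intro h
    by_contra hN
    have f_mapsTo : ∀ v ∈ N, f v ∈ N := fun v hv => mem_N.2 fun k => by
      rw [← Module.End.mul_apply, ← pow_succ]
      exact mem_N.1 hv (k + 1)
    have : Nontrivial N := Submodule.nontrivial_iff_ne_bot.2 hN
    obtain ⟨μ, hμ⟩ := Module.End.exists_eigenvalue (f.restrict f_mapsTo)
    obtain ⟨z, hz⟩ := hμ.exists_hasEigenvector
    have hfz : f z = μ • (z : V) := congrArg Subtype.val hz.apply_eq_smul
    have hgz : g z = 0 := by simpa using mem_N.1 z.2 0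
    exact hz.2 (Subtype.ext (h μ z hfz hgz))

end UnobservableSubspace

namespace Matrix

theorem vecMul_fromCols_eq_zero_iff {R ι κ₁ κ₂ : Type*} [Semiring R] [Fintype ι]
    (M₁ : Matrix ι κ₁ R) (M₂ : Matrix ι κ₂ R) (y : ι → R) :
    y ᵥ* fromCols M₁ M₂ = 0 ↔ y ᵥ* M₁ = 0 ∧ y ᵥ* M₂ = 0 := by
  simp only [vecMul_fromCols, funext_iff, Sum.forall, Sum.elim_inl, Sum.elim_inr, Pi.zero_apply]

theorem pow_mem_span_pow_lt_card {R ι : Type*} [CommRing R] [Nontrivial R] [Fintype ι]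
    [DecidableEq ι] (A : Matrix ι ι R) (k : ℕ) :
    A ^ k ∈ Submodule.span R (Set.range fun i : Fin (Fintype.card ι) => A ^ (i : ℕ)) := by
  rw [PowerBasis.mem_span_pow', pow_eq_aeval_mod_charpoly]
  exact ⟨_, charpoly_degree_eq_dim A ▸ Polynomial.degree_modByMonic_lt _ A.charpoly_monic,
    rfl⟩

variable {K : Type*} [Field K] {ι κ : Type*} [Fintype ι]

theorem rank_eq_card_iff_forall_vecMul_eq_zero [Fintype κ] (M : Matrix ι κ K) :
    M.rank = Fintype.card ι ↔ ∀ y : ι → K, y ᵥ* M = 0 → y = 0 := by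
  rw [eq_comm, rank_eq_finrank_span_row, ← Set.finrank,
    ← linearIndependent_iff_card_eq_finrank_span, ← vecMul_injective_iff, ← coe_vecMulLinear,
    injective_iff_map_eq_zero]
  simp only [vecMulLinear_apply]

theorem vecMul_sub_eq_zero_iff [DecidableEq ι] (A : Matrix ι ι K) (μ : K) (y : ι → K) :
    y ᵥ* (μ • 1 - A) = 0 ↔ y ᵥ* A = μ • y := by
  rw [vecMul_sub, vecMul_smul, vecMul_one, sub_eq_zero, eq_comm]

theorem sub_mulVec_eq_zero_iff [DecidableEq ι] (A : Matrix ι ι K) (μ : K) (x : ι → K) :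
    (μ • 1 - A) *ᵥ x = 0 ↔ A *ᵥ x = μ • x := by
  rw [sub_mulVec, smul_mulVec, one_mulVec, sub_eq_zero, eq_comm]

theorem exists_mulVec_eq_smul_iff_exists_vecMul_eq_smul [DecidableEq ι] (A : Matrix ι ι K)
    (μ : K) :
    (∃ x ≠ 0, A *ᵥ x = μ • x) ↔ ∃ y ≠ 0, y ᵥ* A = μ • y := by
  simp_rw [← sub_mulVec_eq_zero_iff, ← vecMul_sub_eq_zero_iff, exists_mulVec_eq_zero_iff,
    exists_vecMul_eq_zero_iff]

theorem forall_vecMul_pow_mul_eq_zero_imp_eq_zero_iff [DecidableEq ι] [IsAlgClosed K]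
    (A : Matrix ι ι K) (B : Matrix ι κ K) :
    (∀ y : ι → K, (∀ k : ℕ, y ᵥ* (A ^ k * B) = 0) → y = 0) ↔
      ∀ (μ : K) (y : ι → K), y ᵥ* A = μ • y → y ᵥ* B = 0 → y = 0 := by
  have vecMulLinear_pow_apply (k : ℕ) (y : ι → K) : (A.vecMulLinear ^ k) y = y ᵥ* A ^ k := by
    induction k with
    | zero => simp
    | succ k ih =>
      rw [pow_succ', Module.End.mul_apply, ih, vecMulLinear_apply, vecMul_vecMul, pow_succ]
  have h := Module.End.iInf_ker_comp_pow_eq_bot_iff A.vecMulLinear B.vecMulLinear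
  rw [Submodule.eq_bot_iff] at h
  simpa only [Submodule.mem_iInf, LinearMap.mem_ker, LinearMap.comp_apply, vecMulLinear_pow_apply,
    vecMulLinear_apply, vecMul_vecMul] using h

end Matrix

theorem vecMul_kalmanMatrix_eq_zero_iff {n m : ℕ} (A : Matrix (Fin n) (Fin n) ℂ)
    (B : Matrix (Fin n) (Fin m) ℂ) (y : Fin n → ℂ) :
    y ᵥ* kalmanMatrix A B = 0 ↔ ∀ k : ℕ, y ᵥ* (A ^ k * B) = 0 := by
  have vecMul_apply (p : Fin n × Fin m) :
      (y ᵥ* kalmanMatrix A B) p = (y ᵥ* (A ^ (p.1 : ℕ) * B)) p.2 := rfl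
  refine ⟨fun h k => ?_, fun h => funext fun p => by rw [vecMul_apply, h]; rfl⟩
  refine Submodule.span_induction ?_ ?_ ?_ ?_ (A.pow_mem_span_pow_lt_card k)
  · rintro _ ⟨i, rfl⟩
    funext j
    simpa [vecMul_apply] using congrFun h (Fin.cast (Fintype.card_fin n) i, j)
  · simp
  · intro M N _ _ hM hN
    rw [Matrix.add_mul, vecMul_add, hM, hN, add_zero]
  · intro c M _ hM
    rw [Matrix.smul_mul, vecMul_smul, hM, smul_zero]

/-- PBH criterion: `(A, B)` is controllable (Kalman rank `n`) iff
`rank (λI − A, B) = n` for every eigenvalue `λ` of `A`. -/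
theorem pbh_criterion {n m : ℕ} (A : Matrix (Fin n) (Fin n) ℂ)
    (B : Matrix (Fin n) (Fin m) ℂ) :
    (kalmanMatrix A B).rank = n ↔
      ∀ lam : ℂ, (∃ x : Fin n → ℂ, x ≠ 0 ∧ A *ᵥ x = lam • x) →
        (Matrix.fromCols (lam • (1 : Matrix (Fin n) (Fin n) ℂ) - A) B).rank = n := by
  have full_rank {κ : Type} [Fintype κ] (M : Matrix (Fin n) κ ℂ) :
      M.rank = n ↔ ∀ y, y ᵥ* M = 0 → y = 0 := by
    simpa using M.rank_eq_card_iff_forall_vecMul_eq_zero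
  simp_rw [full_rank, vecMul_kalmanMatrix_eq_zero_iff,
    forall_vecMul_pow_mul_eq_zero_imp_eq_zero_iff, vecMul_fromCols_eq_zero_iff,
    vecMul_sub_eq_zero_iff, and_imp,
    exists_mulVec_eq_smul_iff_exists_vecMul_eq_smul]
  refine ⟨fun h μ _ => h μ, fun h μ y hyA hyB => ?_⟩
  by_contra hy
  exact hy (h μ ⟨y, hy, hyA⟩ y hyA hyB)
end
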